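/- arXiv:2410.16328 — 3 statements merged into one kernel-verified Lean document; each statement's English description precedes it below -/
import Mathlib

section
/- Let P : Cᵒᵖ → BoolAlg be a Boolean doctrine over a small category C with finite products. Let ī, j̄ ∈ ℕ, let S, Y₁, …, Y_ī, Z₁, …, Z_j̄ ∈ C, let αᵢ ∈ P(S×Yᵢ) for i = 1, …, ī and βⱼ ∈ P(S×Zⱼ) for j = 1, …, j̄. Then the following are equivalent: (1) for every propositional model (M, 𝔪, s) of P at S, if for every i ∈ {1, …, ī} and every y ∈ M(Yᵢ) one has (s, y) ∈ 𝔪_{S×Yᵢ}(αᵢ), then there is j ∈ {1, …, j̄} such that for every z ∈ M(Zⱼ) one has (s, z) ∈ 𝔪_{S×Zⱼ}(βⱼ); (2) there are n ∈ ℕ, indices l₁, …, l_n ∈ {1, …, ī} and morphisms gᵢ : S × ∏_{j=1}^{j̄} Zⱼ → Y_{lᵢ} (i = 1, …, n) such that, in P(S × ∏_{j=1}^{j̄} Zⱼ), ⋀_{i=1}^{n} P(⟨pr₁, gᵢ⟩)(α_{lᵢ}) ≤ ⋁_{j=1}^{j̄} P(⟨pr₁, pr_{j+1}⟩)(βⱼ).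 (Here elements of M(S×X) are identified with pairs via the canonical isomorphism M(S×X) ≅ M(S) × M(X).) -/
open CategoryTheory CategoryTheory.Limits Opposite

universe w v u v₁ u₁ v₂ u₂ v₃ u₃

namespace BooleanDoctrine

/-- Elements of a Boolean algebra in the category `BoolAlg` can be acted on by morphisms. -/
instance (X Y : BoolAlg) : FunLike (X ⟶ Y) X Y :=
  show FunLike (X ⟶ Y) X Y from ConcreteCategory.instFunLike

/-- A filter of a Boolean algebra: contains `⊤`, closed under binary meets, upward closed. -/
def IsBAFilter {A : Type*} [BooleanAlgebra A] (F : Set A) : Prop :=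
  (⊤ : A) ∈ F ∧ (∀ a b : A, a ∈ F → b ∈ F → a ⊓ b ∈ F) ∧ ∀ a b : A, a ∈ F → a ≤ b → b ∈ F

/-- The fiber of a Boolean doctrine at an object of the base category. -/
abbrev fiber {C : Type u₁} [Category.{v₁} C] (P : Cᵒᵖ ⥤ BoolAlg.{w}) (X : C) : Type w :=
  P.obj (op X)

/-- A universal filter for a Boolean doctrine `P : Cᵒᵖ ⥤ BoolAlg`. -/
def IsUniversalFilter {C : Type u₁} [Category.{v₁} C] [HasFiniteProducts C]
    (P : Cᵒᵖ ⥤ BoolAlg.{w}) (F : ∀ X : C, Set (P.obj (op X))) : Prop :=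
  (∀ (X Y : C) (f : X ⟶ Y) (α : P.obj (op Y)), α ∈ F Y → P.map f.op α ∈ F X) ∧
    ∀ X : C, IsBAFilter (F X)

/-- A universal ideal for a Boolean doctrine `P : Cᵒᵖ ⥤ BoolAlg`. -/
def IsUniversalIdeal {C : Type u₁} [Category.{v₁} C] [HasFiniteProducts C]
    (P : Cᵒᵖ ⥤ BoolAlg.{w}) (I : ∀ X : C, Set (P.obj (op X))) : Prop :=
  (∀ (X Y : C) (m : ℕ) (f : Fin m → (X ⟶ Y)) (α : P.obj (op Y)),
      (Finset.univ.inf fun j => P.map (f j).op α) ∈ I X → α ∈ I Y) ∧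
    (∀ (X : C) (a b : P.obj (op X)), a ≤ b → b ∈ I X → a ∈ I X) ∧
    (∀ (X₁ X₂ : C) (α₁ : P.obj (op X₁)) (α₂ : P.obj (op X₂)), α₁ ∈ I X₁ → α₂ ∈ I X₂ →
      P.map (prod.fst : X₁ ⨯ X₂ ⟶ X₁).op α₁ ⊔ P.map (prod.snd : X₁ ⨯ X₂ ⟶ X₂).op α₂ ∈
        I (X₁ ⨯ X₂)) ∧
    (⊥ : P.obj (op (⊤_ C))) ∈ I (⊤_ C)

/-- A universal ultrafilter for a Boolean doctrine `P : Cᵒᵖ ⥤ BoolAlg`. -/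
def IsUniversalUltrafilter {C : Type u₁} [Category.{v₁} C] [HasFiniteProducts C]
    (P : Cᵒᵖ ⥤ BoolAlg.{w}) (F : ∀ X : C, Set (P.obj (op X))) : Prop :=
  (∀ (X Y : C) (f : X ⟶ Y) (α : P.obj (op Y)), α ∈ F Y → P.map f.op α ∈ F X) ∧
    (∀ X : C, IsBAFilter (F X)) ∧
    (∀ (X₁ X₂ : C) (α₁ : P.obj (op X₁)) (α₂ : P.obj (op X₂)),
      P.map (prod.fst : X₁ ⨯ X₂ ⟶ X₁).op α₁ ⊔ P.map (prod.snd : X₁ ⨯ X₂ ⟶ X₂).op α₂ ∈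
          F (X₁ ⨯ X₂) →
        α₁ ∈ F X₁ ∨ α₂ ∈ F X₂) ∧
    (⊥ : P.obj (op (⊤_ C))) ∉ F (⊤_ C)

/-- Richness of a Boolean doctrine with respect to a family of subsets of the fibers. -/
def IsRich {C : Type u₁} [Category.{v₁} C] [HasFiniteProducts C]
    (P : Cᵒᵖ ⥤ BoolAlg.{w}) (F : ∀ X : C, Set (P.obj (op X))) : Prop :=
  ∀ (X : C) (α : P.obj (op X)), α ∉ F X → ∃ c : (⊤_ C) ⟶ X, P.map c.op α ∉ F (⊤_ C)

/-- The failure of the "universal closure" of `a` witnessed by a constant `c : ⊤ ⟶ X`. -/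
def IsRichAt {C : Type u₁} [Category.{v₁} C] [HasFiniteProducts C]
    (P : Cᵒᵖ ⥤ BoolAlg.{w}) (F : ∀ X : C, Set (P.obj (op X)))
    (X : C) (a : P.obj (op X)) : Prop :=
  ∃ c : (⊤_ C) ⟶ X, P.map c.op a ∉ F (⊤_ C)

/-- The universal filter generated by a family of subsets of the fibers: the intersection of
all universal filters containing the family componentwise. -/
def genUnivFilter {C : Type u₁} [Category.{v₁} C] [HasFiniteProducts C]
    (P : Cᵒᵖ ⥤ BoolAlg.{w}) (A : ∀ X : C, Set (P.obj (op X))) :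
    ∀ X : C, Set (P.obj (op X)) := fun X =>
  {φ | ∀ G : ∀ X' : C, Set (P.obj (op X')),
    IsUniversalFilter P G → (∀ X', A X' ⊆ G X') → φ ∈ G X}

/-- The universal ideal generated by a family of subsets of the fibers: the intersection of
all universal ideals containing the family componentwise. -/
def genUnivIdeal {C : Type u₁} [Category.{v₁} C] [HasFiniteProducts C]
    (P : Cᵒᵖ ⥤ BoolAlg.{w}) (A : ∀ X : C, Set (P.obj (op X))) :
    ∀ X : C, Set (P.obj (op X)) := fun X =>
  {φ | ∀ J : ∀ X' : C, Set (P.obj (op X')),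
    IsUniversalIdeal P J → (∀ X', A X' ⊆ J X') → φ ∈ J X}

/-- The family of subsets of the fibers placing the element `α i` in the component `Y i`. -/
def familyOfPoints {C : Type u₁} [Category.{v₁} C] (P : Cᵒᵖ ⥤ BoolAlg.{w}) {ι : Type u₃}
    (Y : ι → C) (α : ∀ i, P.obj (op (Y i))) : ∀ X : C, Set (P.obj (op X)) := fun X =>
  {a | ∃ (i : ι) (h : Y i = X), a = P.map (eqToHom h.symm).op (α i)}

/-- The subsets doctrine, sending a set to its powerset Boolean algebra and a function to
its preimage map. -/
def subsetsDoctrine : (Type v)ᵒᵖ ⥤ BoolAlg.{v} where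
  obj X := BoolAlg.of (Set X.unop)
  map f := BoolAlg.ofHom
    { toFun := fun S => f.unop ⁻¹' S
      map_sup' := fun _ _ => rfl
      map_inf' := fun _ _ => rfl
      map_top' := rfl
      map_bot' := rfl }
  map_id _ := rfl
  map_comp _ _ := rfl

/-- A Boolean doctrine morphism: a finite-product-preserving functor together with a
natural transformation. -/
structure DoctrineHom {C : Type u₁} [Category.{v₁} C] {D : Type u₂} [Category.{v₂} D]
    (P : Cᵒᵖ ⥤ BoolAlg.{w}) (R : Dᵒᵖ ⥤ BoolAlg.{w}) where
  functor : C ⥤ D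
  preserves : PreservesFiniteProducts functor
  trans : P ⟶ functor.op ⋙ R

/-- Composition of Boolean doctrine morphisms. -/
def DoctrineHom.comp {C : Type u₁} [Category.{v₁} C] {D : Type u₂} [Category.{v₂} D]
    {E : Type u₃} [Category.{v₃} E]
    {P : Cᵒᵖ ⥤ BoolAlg.{w}} {R : Dᵒᵖ ⥤ BoolAlg.{w}} {S : Eᵒᵖ ⥤ BoolAlg.{w}}
    (Φ : DoctrineHom P R) (Ψ : DoctrineHom R S) : DoctrineHom P S where
  functor := Φ.functor ⋙ Ψ.functor
  preserves := by
    have := Φ.preserves; have := Ψ.preserves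
    infer_instance
  trans := Φ.trans ≫ Functor.whiskerLeft Φ.functor.op Ψ.trans

/-- A first-order structure on a Boolean doctrine: fiberwise right adjoints to reindexing
along first projections, satisfying the Beck–Chevalley condition. -/
structure FOStructure {C : Type u₁} [Category.{v₁} C] [HasFiniteProducts C]
    (P : Cᵒᵖ ⥤ BoolAlg.{w}) where
  fa : ∀ X Y : C, P.obj (op (X ⨯ Y)) → P.obj (op X)
  adj : ∀ (X Y : C) (α : P.obj (op X)) (β : P.obj (op (X ⨯ Y))),
      α ≤ fa X Y β ↔ P.map (prod.fst : X ⨯ Y ⟶ X).op α ≤ β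
  bc : ∀ (X X' Y : C) (f : X' ⟶ X) (β : P.obj (op (X ⨯ Y))),
      P.map f.op (fa X Y β) = fa X' Y (P.map (prod.map f (𝟙 Y)).op β)

/-- The existential quantifier `∃ = ¬∀¬` associated to a first-order structure. -/
noncomputable def FOStructure.ex {C : Type u₁} [Category.{v₁} C] [HasFiniteProducts C]
    {P : Cᵒᵖ ⥤ BoolAlg.{w}} (fo : FOStructure P) (X Y : C)
    (β : P.obj (op (X ⨯ Y))) : P.obj (op X) :=
  (fo.fa X Y βᶜ)ᶜ

/-- The canonical comparison morphism `M X ⨯ M Y ⟶ M (X ⨯ Y)` of a Boolean doctrine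
morphism, inverse to the product comparison morphism. -/
noncomputable def DoctrineHom.prodPair {C : Type u₁} [Category.{v₁} C] [HasFiniteProducts C]
    {D : Type u₂} [Category.{v₂} D] [HasFiniteProducts D]
    {P : Cᵒᵖ ⥤ BoolAlg.{w}} {R : Dᵒᵖ ⥤ BoolAlg.{w}} (Φ : DoctrineHom P R) (X Y : C) :
    (Φ.functor.obj X ⨯ Φ.functor.obj Y) ⟶ Φ.functor.obj (X ⨯ Y) :=
  letI := Φ.preserves
  (PreservesLimitPair.iso Φ.functor X Y).inv

/-- The image of an element of `P (X ⨯ Y)` in `R (M X ⨯ M Y)`, transported along the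
canonical isomorphism `M (X ⨯ Y) ≅ M X ⨯ M Y`. -/
noncomputable def DoctrineHom.transProd {C : Type u₁} [Category.{v₁} C] [HasFiniteProducts C]
    {D : Type u₂} [Category.{v₂} D] [HasFiniteProducts D]
    {P : Cᵒᵖ ⥤ BoolAlg.{w}} {R : Dᵒᵖ ⥤ BoolAlg.{w}} (Φ : DoctrineHom P R) (X Y : C)
    (α : P.obj (op (X ⨯ Y))) : R.obj (op (Φ.functor.obj X ⨯ Φ.functor.obj Y)) :=
  R.map (Φ.prodPair X Y).op (Φ.trans.app (op (X ⨯ Y)) α)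

/-- A Boolean doctrine morphism between first-order Boolean doctrines is first-order when it
commutes with the universal quantifiers. -/
def DoctrineHom.IsFO {C : Type u₁} [Category.{v₁} C] [HasFiniteProducts C]
    {D : Type u₂} [Category.{v₂} D] [HasFiniteProducts D]
    {P : Cᵒᵖ ⥤ BoolAlg.{w}} {R : Dᵒᵖ ⥤ BoolAlg.{w}} (Φ : DoctrineHom P R)
    (foP : FOStructure P) (foR : FOStructure R) : Prop :=
  ∀ (X Y : C) (β : P.obj (op (X ⨯ Y))),
    (Φ.trans.app (op X) (foP.fa X Y β) : R.obj (op (Φ.functor.obj X))) =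
      foR.fa (Φ.functor.obj X) (Φ.functor.obj Y) (Φ.transProd X Y β)

/-- The Boolean doctrine morphism with identity functor part induced by a natural
transformation between two doctrines over the same base. -/
def idDoctrineHom {C : Type u₁} [Category.{v₁} C] {P Q : Cᵒᵖ ⥤ BoolAlg.{w}} (η : P ⟶ Q) :
    DoctrineHom P Q where
  functor := 𝟭 C
  preserves := inferInstance
  trans := η

/-- A quantifier completion of a Boolean doctrine `P`: a first-order Boolean doctrine `Q`
over the same base category together with a Boolean doctrine morphism `(𝟭 C, ι) : P ⟶ Q`
whose functor part is the identity, such that every Boolean doctrine morphism from `P` to a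
first-order Boolean doctrine factors uniquely through it via a first-order Boolean doctrine
morphism. -/
structure QuantifierCompletion.{w', v', u', v₁', u₁'} {C : Type u₁'} [Category.{v₁'} C]
    [HasFiniteProducts C] (P : Cᵒᵖ ⥤ BoolAlg.{w'}) where
  Q : Cᵒᵖ ⥤ BoolAlg.{w'}
  fo : FOStructure Q
  ι : P ⟶ Q
  univ : ∀ {D : Type u'} [Category.{v'} D] [HasFiniteProducts D]
      (R : Dᵒᵖ ⥤ BoolAlg.{w'}) (foR : FOStructure R) (Φ : DoctrineHom P R),
      ∃! Ψ : DoctrineHom Q R, Ψ.IsFO fo foR ∧ Φ = (idDoctrineHom ι).comp Ψ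

/-- A propositional model of a Boolean doctrine: a Boolean doctrine morphism to the
subsets doctrine. -/
abbrev PropModel {C : Type u} [Category.{v} C] (P : Cᵒᵖ ⥤ BoolAlg.{v}) :=
  DoctrineHom P subsetsDoctrine.{v}

/-- The subset of `M X` interpreting an element `α ∈ P X` in a propositional model. -/
def PropModel.interp {C : Type u} [Category.{v} C] {P : Cᵒᵖ ⥤ BoolAlg.{v}}
    (M : PropModel P) {X : C} (α : P.obj (op X)) : Set (M.functor.obj X) :=
  M.trans.app (op X) α



/-- The object map of a Boolean doctrine morphism. -/
abbrev DoctrineHom.onObj {C : Type u₁} [Category.{v₁} C] {D : Type u₂} [Category.{v₂} D]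
    {P : Cᵒᵖ ⥤ BoolAlg.{w}} {R : Dᵒᵖ ⥤ BoolAlg.{w}} (Φ : DoctrineHom P R) (X : C) : D :=
  Φ.functor.obj X

/-- The component at `X` of the natural transformation of a Boolean doctrine morphism,
applied to an element of the fiber. -/
abbrev DoctrineHom.appAt {C : Type u₁} [Category.{v₁} C] {D : Type u₂} [Category.{v₂} D]
    {P : Cᵒᵖ ⥤ BoolAlg.{w}} {R : Dᵒᵖ ⥤ BoolAlg.{w}} (Φ : DoctrineHom P R) (X : C)
    (a : P.obj (op X)) : R.obj (op (Φ.functor.obj X)) :=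
  Φ.trans.app (op X) a

/-!
Soundness: if a point `s` of a model satisfied every `∀ y, αᵢ(s, y)` but no `∀ z, βⱼ(s, z)`,
the counterexamples `(s, zⱼ)` would amalgamate, because the model preserves finite products, to
a single point `(s, (zⱼ)ⱼ)` of `S × ∏ Zⱼ` satisfying the left-hand side of the inequality but not
its right-hand side.

Completeness: if no such inequality holds, the filter generated by all instances
`P⟨pr₁, g⟩(αᵢ)` misses the principal ideal of the right-hand side, so the prime ideal theorem
gives a prime ideal `J` of `P(S × ∏ Zⱼ)` containing the right-hand side and no instance. The
generalized elements `f : S × ∏ Zⱼ → X`, with `f` satisfying `a` iff `P(f)(a) ∉ J`, form a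
model in which `s = pr₁` satisfies every `∀ y, αᵢ` (a generalized element of `S × Yᵢ` over `pr₁`
is some `⟨pr₁, g⟩`) but no `∀ z, βⱼ` (witnessed by `⟨pr₁, pr_{j+1}⟩`).
-/

theorem _root_.Order.Ideal.IsPrime.inf_mem_iff {A : Type*} [SemilatticeInf A]
    {I : Order.Ideal A} (hI : I.IsPrime) {x y : A} : x ⊓ y ∈ I ↔ x ∈ I ∨ y ∈ I :=
  ⟨hI.mem_or_mem, fun h => h.elim (I.lower inf_le_left) (I.lower inf_le_right)⟩

theorem _root_.Order.Ideal.exists_isPrime_of_forall_not_inf_le {A : Type*} [DistribLattice A]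
    [OrderTop A] {ι : Type*} (φ : ι → A) (b : A)
    (h : ∀ (n : ℕ) (k : Fin n → ι), ¬ Finset.univ.inf (φ ∘ k) ≤ b) :
    ∃ J : Order.Ideal A, J.IsPrime ∧ b ∈ J ∧ ∀ i, φ i ∉ J := by
  have hF : Order.IsPFilter {x | ∃ (n : ℕ) (k : Fin n → ι), Finset.univ.inf (φ ∘ k) ≤ x} := by
    refine .of_def ⟨⊤, 0, Fin.elim0, le_top⟩ ?_ fun hxy ⟨n, k, hk⟩ => ⟨n, k, hk.trans hxy⟩
    rintro x ⟨m, k, hk⟩ y ⟨n, k', hk'⟩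
    refine ⟨_, ⟨m + n, Fin.append k k', le_rfl⟩, le_trans ?_ hk, le_trans ?_ hk'⟩
    · exact Finset.le_inf fun i _ =>
        (Finset.inf_le (Finset.mem_univ (Fin.castAdd n i))).trans_eq (by simp)
    · exact Finset.le_inf fun i _ =>
        (Finset.inf_le (Finset.mem_univ (Fin.natAdd m i))).trans_eq (by simp)
  obtain ⟨J, hJ, hbJ, hFJ⟩ := DistribLattice.prime_ideal_of_disjoint_filter_ideal
    (F := hF.toPFilter) (I := Order.Ideal.principal b) <|
      Set.disjoint_left.2 fun x ⟨n, k, hk⟩ hxb => h n k (hk.trans hxb)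
  exact ⟨J, hJ, hbJ le_rfl, fun i hi => Set.disjoint_left.1 hFJ ⟨1, fun _ => i, by simp⟩ hi⟩

section FunctorToTypes

variable {C : Type u₁} [Category.{v₁} C] (F : C ⥤ Type v)

theorem _root_.CategoryTheory.FunctorToTypes.exists_map_fst_eq_and_map_snd_eq {X Y : C}
    [HasBinaryProduct X Y] [PreservesLimit (pair X Y) F] (x : F.obj X) (y : F.obj Y) :
    ∃ w : F.obj (X ⨯ Y), F.map prod.fst w = x ∧ F.map prod.snd w = y := by
  obtain ⟨l, hl₁, hl₂⟩ := BinaryFan.IsLimit.lift'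
    (isLimitOfHasBinaryProductOfPreservesLimit F X Y)
    (TypeCat.ofHom fun _ : PUnit => x) (TypeCat.ofHom fun _ => y)
  exact ⟨l PUnit.unit, ConcreteCategory.congr_hom hl₁ _, ConcreteCategory.congr_hom hl₂ _⟩

theorem _root_.CategoryTheory.FunctorToTypes.eq_of_map_fst_eq_of_map_snd_eq {X Y : C}
    [HasBinaryProduct X Y] [PreservesLimit (pair X Y) F] {w w' : F.obj (X ⨯ Y)}
    (h₁ : F.map prod.fst w = F.map prod.fst w') (h₂ : F.map prod.snd w = F.map prod.snd w') :
    w = w' := by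
  have := BinaryFan.IsLimit.hom_ext (isLimitOfHasBinaryProductOfPreservesLimit F X Y)
    (f := TypeCat.ofHom fun _ : PUnit => w) (g := TypeCat.ofHom fun _ : PUnit => w')
    (by ext; exact h₁) (by ext; exact h₂)
  exact ConcreteCategory.congr_hom this PUnit.unit

theorem _root_.CategoryTheory.FunctorToTypes.exists_map_π_eq {ι : Type*} {Z : ι → C}
    [HasProduct Z] [PreservesLimit (Discrete.functor Z) F] (z : ∀ j, F.obj (Z j)) :
    ∃ w : F.obj (∏ᶜ Z), ∀ j, F.map (Pi.π Z j) w = z j := by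
  have hF := isLimitOfHasProductOfPreservesLimit F Z
  let c (j : ι) : PUnit ⟶ F.obj (Z j) := TypeCat.ofHom fun _ => z j
  exact ⟨Fan.IsLimit.lift hF c PUnit.unit,
    fun j => ConcreteCategory.congr_hom (Fan.IsLimit.fac hF c j) PUnit.unit⟩

theorem _root_.CategoryTheory.FunctorToTypes.exists_map_fst_eq_and_map_lift_eq
    [HasFiniteProducts C] [PreservesFiniteProducts F] (S : C) {ι : Type} [Finite ι]
    (Z : ι → C) (s : F.obj S) (w : ∀ j, F.obj (S ⨯ Z j)) (hw : ∀ j, F.map prod.fst (w j) = s) :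
    ∃ v : F.obj (S ⨯ ∏ᶜ Z), F.map prod.fst v = s ∧
      ∀ j, F.map (prod.lift prod.fst (prod.snd ≫ Pi.π Z j)) v = w j := by
  obtain ⟨z, hz⟩ := FunctorToTypes.exists_map_π_eq F fun j => F.map prod.snd (w j)
  obtain ⟨v, hv₁, hv₂⟩ := FunctorToTypes.exists_map_fst_eq_and_map_snd_eq F s z
  refine ⟨v, hv₁, fun j => FunctorToTypes.eq_of_map_fst_eq_of_map_snd_eq F ?_ ?_⟩
  · rw [← Functor.map_comp_apply, prod.lift_fst, hv₁, hw]
  · rw [← Functor.map_comp_apply, prod.lift_snd, Functor.map_comp_apply, hv₂, hz]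

end FunctorToTypes

instance (X Y : BoolAlg) : BoundedLatticeHomClass (X ⟶ Y) X Y where
  map_sup f := map_sup f.hom
  map_inf f := map_inf f.hom
  map_top f := map_top f.hom
  map_bot f := map_bot f.hom

section PropModel

variable {C : Type u} [Category.{v} C] {P : Cᵒᵖ ⥤ BoolAlg.{v}}

def PropModel.ofPrimeIdeal (P : Cᵒᵖ ⥤ BoolAlg.{v}) (W : C) {J : Order.Ideal (P.obj (op W))}
    (hJ : J.IsPrime) : PropModel P where
  functor := coyoneda.obj (op W)
  preserves := inferInstance
  trans :=
    { app X := BoolAlg.ofHom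
        { toFun a := {f | P.map f.op a ∉ J}
          map_sup' a b := by
            ext
            simp only [Set.mem_ofPred_eq, map_sup, Order.Ideal.sup_mem_iff, not_and_or]
            rfl
          map_inf' a b := by ext; simp [hJ.inf_mem_iff]
          map_top' := by ext; simpa using hJ.top_notMem
          map_bot' := by ext; simp [J.bot_mem] }
      naturality X Y f := by
        ext a : 2
        refine Set.ext fun g => ?_
        change P.map g.op (P.map f a) ∉ J ↔ P.map (g ≫ f.unop).op a ∉ J
        rw [op_comp, P.map_comp]
        rfl }

theorem PropModel.mem_interp_ofPrimeIdeal (W : C) {J : Order.Ideal (P.obj (op W))}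
    (hJ : J.IsPrime) {X : C} (a : P.obj (op X)) (f : W ⟶ X) :
    f ∈ (PropModel.ofPrimeIdeal P W hJ).interp a ↔ P.map f.op a ∉ J :=
  Iff.rfl

theorem PropModel.interp_map (M : PropModel P) {X X' : C} (f : X ⟶ X') (a : P.obj (op X')) :
    M.interp (P.map f.op a) = M.functor.map f ⁻¹' M.interp a :=
  DFunLike.congr_fun (M.trans.naturality f.op) a

theorem PropModel.interp_mono (M : PropModel P) {X : C} {a b : P.obj (op X)} (h : a ≤ b) :
    M.interp a ⊆ M.interp b :=
  OrderHomClass.mono (M.trans.app (op X)) h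

theorem PropModel.mem_interp_finset_inf (M : PropModel P) {X : C} {ι : Type*} (s : Finset ι)
    (a : ι → P.obj (op X)) (x : M.functor.obj X) :
    x ∈ M.interp (s.inf a) ↔ ∀ i ∈ s, x ∈ M.interp (a i) := by
  rw [PropModel.interp, map_finset_inf]
  change x ∈ (s.inf fun i => M.interp (a i) : Set (M.functor.obj X)) ↔ _
  simp [Finset.inf_set_eq_iInter]

theorem PropModel.mem_interp_finset_sup (M : PropModel P) {X : C} {ι : Type*} (s : Finset ι)
    (a : ι → P.obj (op X)) (x : M.functor.obj X) :
    x ∈ M.interp (s.sup a) ↔ ∃ i ∈ s, x ∈ M.interp (a i) := by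
  rw [PropModel.interp, map_finset_sup]
  change x ∈ (s.sup fun i => M.interp (a i) : Set (M.functor.obj X)) ↔ _
  simp [Finset.sup_set_eq_biUnion]

/-- `M, s ⊨ ∀ y, α(s, y)`. -/
def PropModel.SatisfiesForall (M : PropModel P) {S Y : C} [HasBinaryProduct S Y]
    (s : M.functor.obj S) (α : P.obj (op (S ⨯ Y))) : Prop :=
  ∀ w : M.functor.obj (S ⨯ Y), M.functor.map prod.fst w = s → w ∈ M.interp α

end PropModel

section Entailment

variable {C : Type u} [Category.{v} C] [HasFiniteProducts C] {P : Cᵒᵖ ⥤ BoolAlg.{v}}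
  {ibar jbar : ℕ} {S : C} {Y : Fin ibar → C} {Z : Fin jbar → C}
  {α : ∀ i, P.obj (op (S ⨯ Y i))} {β : ∀ j, P.obj (op (S ⨯ Z j))}

theorem PropModel.exists_satisfiesForall_of_inf_le (M : PropModel P) (s : M.functor.obj S)
    {n : ℕ} {l : Fin n → Fin ibar} {g : ∀ i : Fin n, (S ⨯ ∏ᶜ Z) ⟶ Y (l i)}
    (hle : (Finset.univ.inf fun i =>
        P.map (prod.lift (prod.fst : S ⨯ ∏ᶜ Z ⟶ S) (g i)).op (α (l i))) ≤
      Finset.univ.sup fun j =>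
        P.map (prod.lift (prod.fst : S ⨯ ∏ᶜ Z ⟶ S)
          ((prod.snd : S ⨯ ∏ᶜ Z ⟶ ∏ᶜ Z) ≫ Pi.π Z j)).op (β j))
    (hα : ∀ i, M.SatisfiesForall s (α i)) : ∃ j, M.SatisfiesForall s (β j) := by
  have := M.preserves
  by_contra! h
  simp only [PropModel.SatisfiesForall, not_forall, exists_prop] at h
  choose w hw_fst hw_β using h
  obtain ⟨v, hv_fst, hv⟩ :=
    FunctorToTypes.exists_map_fst_eq_and_map_lift_eq M.functor S Z s w hw_fst
  have hv_inf : v ∈ M.interp (Finset.univ.inf fun i =>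
      P.map (prod.lift (prod.fst : S ⨯ ∏ᶜ Z ⟶ S) (g i)).op (α (l i))) := by
    refine (M.mem_interp_finset_inf _ _ v).2 fun i _ => ?_
    rw [M.interp_map]
    exact hα _ _ (by rw [← Functor.map_comp_apply, prod.lift_fst, hv_fst])
  obtain ⟨j, -, hj⟩ := (M.mem_interp_finset_sup _ _ v).1 (M.interp_mono hle hv_inf)
  rw [M.interp_map, Set.mem_preimage, hv] at hj
  exact hw_β j hj

theorem exists_inf_le_of_forall_satisfiesForall
    (h : ∀ (M : PropModel P) (s : M.functor.obj S),
      (∀ i, M.SatisfiesForall s (α i)) → ∃ j, M.SatisfiesForall s (β j)) :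
    ∃ (n : ℕ) (l : Fin n → Fin ibar) (g : ∀ i : Fin n, (S ⨯ ∏ᶜ Z) ⟶ Y (l i)),
      (Finset.univ.inf fun i =>
          P.map (prod.lift (prod.fst : S ⨯ ∏ᶜ Z ⟶ S) (g i)).op (α (l i))) ≤
        Finset.univ.sup fun j =>
          P.map (prod.lift (prod.fst : S ⨯ ∏ᶜ Z ⟶ S)
            ((prod.snd : S ⨯ ∏ᶜ Z ⟶ ∏ᶜ Z) ≫ Pi.π Z j)).op (β j) := by
  by_contra! hnot
  obtain ⟨J, hJ, hβJ, hαJ⟩ := Order.Ideal.exists_isPrime_of_forall_not_inf_le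
    (fun k : Σ i, (S ⨯ ∏ᶜ Z ⟶ Y i) => P.map (prod.lift prod.fst k.2).op (α k.1)) _
    fun n k => hnot n (fun i => (k i).1) fun i => (k i).2
  obtain ⟨j, hj⟩ := h (PropModel.ofPrimeIdeal P _ hJ) prod.fst
    fun i (w : S ⨯ ∏ᶜ Z ⟶ S ⨯ Y i) (hw : w ≫ prod.fst = prod.fst) => by
      have hw_eq : w = prod.lift prod.fst (w ≫ prod.snd) :=
        prod.hom_ext (hw.trans (prod.lift_fst _ _).symm) (prod.lift_snd _ _).symm
      exact (PropModel.mem_interp_ofPrimeIdeal _ hJ _ w).2 (hw_eq ▸ hαJ ⟨i, w ≫ prod.snd⟩)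
  refine hj (prod.lift prod.fst (prod.snd ≫ Pi.π Z j)) (prod.lift_fst _ _) (J.lower ?_ hβJ)
  exact Finset.le_sup (f := fun j => P.map (prod.lift prod.fst (prod.snd ≫ Pi.π Z j)).op (β j))
    (Finset.mem_univ j)

end Entailment

theorem stmt3 {C : Type u} [SmallCategory C] [HasFiniteProducts C]
    (P : Cᵒᵖ ⥤ BoolAlg.{u}) {ibar jbar : ℕ} (S : C) (Y : Fin ibar → C) (Z : Fin jbar → C)
    (α : ∀ i, P.obj (op (S ⨯ Y i))) (β : ∀ j, P.obj (op (S ⨯ Z j))) :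
    (∀ (M : PropModel P) (s : M.functor.obj S),
        (∀ i, ∀ w : M.functor.obj (S ⨯ Y i),
            M.functor.map (prod.fst : S ⨯ Y i ⟶ S) w = s → w ∈ PropModel.interp M (α i)) →
          ∃ j, ∀ w : M.functor.obj (S ⨯ Z j),
            M.functor.map (prod.fst : S ⨯ Z j ⟶ S) w = s → w ∈ PropModel.interp M (β j)) ↔
      ∃ (n : ℕ) (l : Fin n → Fin ibar) (g : ∀ i : Fin n, (S ⨯ ∏ᶜ Z) ⟶ Y (l i)),
        (Finset.univ.inf fun i =>
            P.map (prod.lift (prod.fst : S ⨯ ∏ᶜ Z ⟶ S) (g i)).op (α (l i))) ≤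
          Finset.univ.sup fun j =>
            P.map (prod.lift (prod.fst : S ⨯ ∏ᶜ Z ⟶ S)
              ((prod.snd : S ⨯ ∏ᶜ Z ⟶ ∏ᶜ Z) ≫ Pi.π Z j)).op (β j) :=
  ⟨exists_inf_le_of_forall_satisfiesForall, fun ⟨_, _, _, hle⟩ M s =>
    M.exists_satisfiesForall_of_inf_le s hle⟩

end BooleanDoctrine
end

section
/- Let P : Cᵒᵖ → BoolAlg be a Boolean doctrine over a category C with finite products, let ī, j̄ ∈ ℕ, let Y₁, …, Y_ī, Z₁, …, Z_j̄ ∈ C, let αᵢ ∈ P(Yᵢ) (i = 1, …, ī) and βⱼ ∈ P(Zⱼ) (j = 1, …, j̄). Then the following are equivalent: (1) the universal filter generated by the family placing αᵢ in component Yᵢ (i = 1, …, ī) intersects, in some component, the universal ideal generated by the family placing βⱼ in component Zⱼ (j = 1, …, j̄); (2) there are n ∈ ℕ, indices l₁, …, l_n ∈ {1, …, ī} and morphisms gᵢ : ∏_{j=1}^{j̄} Zⱼ → Y_{lᵢ} (i = 1, …, n) such that, in P(∏_{j=1}^{j̄} Zⱼ), ⋀_{i=1}^{n} P(gᵢ)(α_{lᵢ})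 ≤ ⋁_{j=1}^{j̄} P(prⱼ)(βⱼ). -/
open CategoryTheory CategoryTheory.Limits Opposite

universe w v u v₁ u₁ v₂ u₂ v₃ u₃

namespace BooleanDoctrine

/-! The universal filter generated by the `αᵢ` consists of the elements above a finite meet of
reindexings of the `αᵢ`. The universal ideal generated by the `βⱼ` consists of the `φ ∈ P(X)`
for which the meet of finitely many reindexings of `φ` along maps `∏ⱼ Zⱼ ⟶ X` lies below
`b = ⋁ⱼ P(prⱼ)(βⱼ)`: these `φ` form a universal ideal, and every universal ideal containing the
`βⱼ` contains `b` (by induction on the number of factors), hence all of them. So a common element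
of the two pulls back to finitely many elements of the filter at `∏ⱼ Zⱼ` whose meet lies
below `b`, which puts `b` itself into the filter; this is condition (2). -/

instance inst_s13 (X Y : BoolAlg) : BoundedLatticeHomClass (X ⟶ Y) X Y where
  map_sup f := map_sup (ConcreteCategory.hom f)
  map_inf f := map_inf (ConcreteCategory.hom f)
  map_top f := map_top (ConcreteCategory.hom f)
  map_bot f := map_bot (ConcreteCategory.hom f)

theorem _root_.Finset.inf_univ_comp_equiv {A ι κ : Type*} [SemilatticeInf A] [OrderTop A]
    [Fintype ι] [Fintype κ] (e : ι ≃ κ) (f : κ → A) :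
    (Finset.univ.inf fun i => f (e i)) = Finset.univ.inf f := by
  rw [← Finset.univ_map_equiv_to_embedding e, Finset.inf_map]
  rfl

theorem IsBAFilter.finset_inf_mem {A ι : Type*} [BooleanAlgebra A] {F : Set A}
    (hF : IsBAFilter F) (s : Finset ι) {t : ι → A} (ht : ∀ i ∈ s, t i ∈ F) : s.inf t ∈ F :=
  Finset.inf_induction hF.1 (fun a ha b hb => hF.2.1 a b ha hb) ht

section Doctrine

variable {C : Type u₁} [Category.{v₁} C] (P : Cᵒᵖ ⥤ BoolAlg.{w})

theorem map_comp_apply {X Y Z : C} (f : X ⟶ Y) (g : Y ⟶ Z) (a : P.obj (op Z)) :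
    P.map (f ≫ g).op a = P.map f.op (P.map g.op a) := by
  rw [op_comp, P.map_comp]
  rfl

theorem map_eqToHom_refl_apply {X : C} (a : P.obj (op X)) :
    P.map (eqToHom (rfl : X = X)).op a = a := by
  rw [eqToHom_refl, op_id, P.map_id]
  rfl

theorem mem_familyOfPoints_self {ι : Type u₃} (Y : ι → C) (α : ∀ i, P.obj (op (Y i))) (i : ι) :
    α i ∈ familyOfPoints P Y α (Y i) :=
  ⟨i, rfl, (map_eqToHom_refl_apply P (α i)).symm⟩

def filterOfPoints {ι₀ : Type*} (Y : ι₀ → C) (α : ∀ i, P.obj (op (Y i))) (X : C) :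
    Set (P.obj (op X)) :=
  {φ | ∃ (ι : Type) (_ : Fintype ι) (l : ι → ι₀) (f : ∀ i, X ⟶ Y (l i)),
    (Finset.univ.inf fun i => P.map (f i).op (α (l i))) ≤ φ}

theorem familyOfPoints_subset_filterOfPoints {ι₀ : Type*} (Y : ι₀ → C)
    (α : ∀ i, P.obj (op (Y i))) (X : C) : familyOfPoints P Y α X ⊆ filterOfPoints P Y α X := by
  rintro a ⟨i, h, rfl⟩
  exact ⟨Unit, inferInstance, fun _ => i, fun _ => eqToHom h.symm, by simp⟩

def idealBelow (W : C) (b : P.obj (op W)) (X : C) : Set (P.obj (op X)) :=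
  {φ | ∃ (κ : Type) (_ : Fintype κ) (h : κ → (W ⟶ X)),
    (Finset.univ.inf fun r => P.map (h r).op φ) ≤ b}

theorem self_mem_idealBelow (W : C) (b : P.obj (op W)) : b ∈ idealBelow P W b W :=
  ⟨Unit, inferInstance, fun _ => 𝟙 W, by simp⟩

variable [HasFiniteProducts C]

section

variable {P}

theorem genUnivFilter_eq {A G : ∀ X : C, Set (P.obj (op X))} (hG : IsUniversalFilter P G)
    (hAG : ∀ X, A X ⊆ G X)
    (hmin : ∀ G', IsUniversalFilter P G' → (∀ X, A X ⊆ G' X) → ∀ X, G X ⊆ G' X) :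
    genUnivFilter P A = G :=
  funext fun X =>
    Set.Subset.antisymm (fun _ hφ => hφ G hG hAG) fun _ hφ G' hG' hAG' => hmin G' hG' hAG' X hφ

theorem genUnivIdeal_eq {A I : ∀ X : C, Set (P.obj (op X))} (hI : IsUniversalIdeal P I)
    (hAI : ∀ X, A X ⊆ I X)
    (hmin : ∀ I', IsUniversalIdeal P I' → (∀ X, A X ⊆ I' X) → ∀ X, I X ⊆ I' X) :
    genUnivIdeal P A = I :=
  funext fun X =>
    Set.Subset.antisymm (fun _ hφ => hφ I hI hAI) fun _ hφ I' hI' hAI' => hmin I' hI' hAI' X hφ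

namespace IsUniversalIdeal

variable {I : ∀ X : C, Set (P.obj (op X))}

theorem mem_of_map_le (hI : IsUniversalIdeal P I) {X Y : C} (f : X ⟶ Y) {a : P.obj (op Y)}
    {b : P.obj (op X)} (hab : P.map f.op a ≤ b) (hb : b ∈ I X) : a ∈ I Y :=
  hI.1 X Y 1 (fun _ => f) a (hI.2.1 X _ b (by simpa using hab) hb)

theorem bot_mem_of_hom (hI : IsUniversalIdeal P I) {X : C} (f : ⊤_ C ⟶ X) :
    (⊥ : P.obj (op X)) ∈ I X :=
  hI.mem_of_map_le f (map_bot _).le hI.2.2.2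

theorem sup_map_pi_mem (hI : IsUniversalIdeal P I) :
    ∀ {m : ℕ} (W : Fin m → C) (γ : ∀ j, P.obj (op (W j))), (∀ j, γ j ∈ I (W j)) →
      (Finset.univ.sup fun j => P.map (Pi.π W j).op (γ j)) ∈ I (∏ᶜ W)
  | 0, W, γ, _ => by
    simpa using hI.bot_mem_of_hom (Pi.lift fun j => j.elim0)
  | m + 1, W, γ, hγ => by
    have hpair := hI.2.2.1 _ _ _ _ (hγ 0)
      (hI.sup_map_pi_mem (fun j => W j.succ) (fun j => γ j.succ) fun j => hγ j.succ)
    refine hI.mem_of_map_le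
      (Pi.lift (Fin.cases prod.fst fun j => prod.snd ≫ Pi.π (fun j => W j.succ) j)) ?_ hpair
    rw [Fin.univ_succ, Finset.sup_cons, Finset.sup_map, map_sup, map_finset_sup, map_finset_sup]
    simp only [Function.comp_def, ← map_comp_apply, Pi.lift_π, Fin.cases_zero]
    exact le_rfl

end IsUniversalIdeal

theorem IsUniversalFilter.mem_of_mem_idealBelow {F : ∀ X : C, Set (P.obj (op X))}
    (hF : IsUniversalFilter P F) {W X : C} {b : P.obj (op W)} {φ : P.obj (op X)}
    (hφF : φ ∈ F X) (hφb : φ ∈ idealBelow P W b X) : b ∈ F W := by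
  obtain ⟨κ, _, h, hle⟩ := hφb
  exact (hF.2 W).2.2 _ b ((hF.2 W).finset_inf_mem _ fun r _ => hF.1 _ _ (h r) φ hφF) hle

end

theorem isUniversalFilter_filterOfPoints {ι₀ : Type*} (Y : ι₀ → C)
    (α : ∀ i, P.obj (op (Y i))) : IsUniversalFilter P (filterOfPoints P Y α) := by
  refine ⟨?_, fun X => ⟨⟨Empty, inferInstance, Empty.elim, fun i => i.elim, le_top⟩, ?_, ?_⟩⟩
  · rintro X X' g φ ⟨ι, _, l, f, hle⟩
    refine ⟨ι, ‹_›, l, fun i => g ≫ f i, le_trans (le_of_eq ?_) (OrderHomClass.mono _ hle)⟩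
    simp only [map_comp_apply, map_finset_inf, Function.comp_def]
  · rintro a b ⟨ι₁, _, l₁, f₁, h₁⟩ ⟨ι₂, _, l₂, f₂, h₂⟩
    refine ⟨ι₁ ⊕ ι₂, inferInstance, Sum.elim l₁ l₂, Sum.rec f₁ f₂, ?_⟩
    rw [← Finset.univ_disjSum_univ, Finset.inf_disjSum]
    exact inf_le_inf h₁ h₂
  · rintro a b ⟨ι, _, l, f, h⟩ hab
    exact ⟨ι, ‹_›, l, f, h.trans hab⟩

theorem filterOfPoints_subset {ι₀ : Type*} (Y : ι₀ → C) (α : ∀ i, P.obj (op (Y i)))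
    {G : ∀ X : C, Set (P.obj (op X))} (hG : IsUniversalFilter P G)
    (hYG : ∀ X, familyOfPoints P Y α X ⊆ G X) (X : C) : filterOfPoints P Y α X ⊆ G X := by
  rintro φ ⟨ι, _, l, f, hle⟩
  refine (hG.2 X).2.2 _ φ ((hG.2 X).finset_inf_mem _ fun i _ => ?_) hle
  exact hG.1 _ _ (f i) _ (hYG _ (mem_familyOfPoints_self P Y α (l i)))

theorem genUnivFilter_familyOfPoints {ι₀ : Type*} (Y : ι₀ → C) (α : ∀ i, P.obj (op (Y i))) :
    genUnivFilter P (familyOfPoints P Y α) = filterOfPoints P Y α :=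
  genUnivFilter_eq (isUniversalFilter_filterOfPoints P Y α)
    (familyOfPoints_subset_filterOfPoints P Y α) fun _ hG hYG => filterOfPoints_subset P Y α hG hYG

theorem isUniversalIdeal_idealBelow (W : C) (b : P.obj (op W)) :
    IsUniversalIdeal P (idealBelow P W b) := by
  refine ⟨?_, ?_, ?_, ⟨Unit, inferInstance, fun _ => terminal.from W, by simp⟩⟩
  · rintro X X' m f a ⟨κ, _, h, hle⟩
    refine ⟨κ × Fin m, inferInstance, fun p => h p.1 ≫ f p.2, le_trans (le_of_eq ?_) hle⟩
    rw [← Finset.univ_product_univ, Finset.inf_product_left]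
    simp only [map_comp_apply, map_finset_inf, Function.comp_def]
  · rintro X a a' haa' ⟨κ, _, h, hle⟩
    exact ⟨κ, ‹_›, h, le_trans (Finset.inf_mono_fun fun r _ => OrderHomClass.mono _ haa') hle⟩
  · rintro X₁ X₂ a₁ a₂ ⟨κ₁, _, h₁, hle₁⟩ ⟨κ₂, _, h₂, hle₂⟩
    refine ⟨κ₁ × κ₂, inferInstance, fun p => prod.lift (h₁ p.1) (h₂ p.2),
      le_trans (le_of_eq ?_) (sup_le hle₁ hle₂)⟩
    rw [Finset.inf_sup_inf, Finset.univ_product_univ]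
    simp only [map_sup, ← map_comp_apply, prod.lift_fst, prod.lift_snd]

theorem familyOfPoints_subset_idealBelow {κ : Type} [Fintype κ] (Z : κ → C)
    (β : ∀ j, P.obj (op (Z j))) (X : C) :
    familyOfPoints P Z β X ⊆
      idealBelow P (∏ᶜ Z) (Finset.univ.sup fun j => P.map (Pi.π Z j).op (β j)) X := by
  rintro a ⟨j, rfl, rfl⟩
  refine ⟨Unit, inferInstance, fun _ => Pi.π Z j, ?_⟩
  simpa [map_eqToHom_refl_apply] using
    Finset.le_sup (f := fun j => P.map (Pi.π Z j).op (β j)) (Finset.mem_univ j)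

theorem idealBelow_subset {m : ℕ} (Z : Fin m → C) (β : ∀ j, P.obj (op (Z j)))
    {I : ∀ X : C, Set (P.obj (op X))} (hI : IsUniversalIdeal P I)
    (hZI : ∀ X, familyOfPoints P Z β X ⊆ I X) (X : C) :
    idealBelow P (∏ᶜ Z) (Finset.univ.sup fun j => P.map (Pi.π Z j).op (β j)) X ⊆ I X := by
  rintro φ ⟨κ, _, h, hle⟩
  have hsup := hI.sup_map_pi_mem Z β fun j => hZI _ (mem_familyOfPoints_self P Z β j)
  refine hI.1 _ X _ (fun i => h ((Fintype.equivFin κ).symm i)) φ (hI.2.1 _ _ _ ?_ hsup)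
  rwa [Finset.inf_univ_comp_equiv (Fintype.equivFin κ).symm (fun r => P.map (h r).op φ)]

theorem genUnivIdeal_familyOfPoints {m : ℕ} (Z : Fin m → C) (β : ∀ j, P.obj (op (Z j))) :
    genUnivIdeal P (familyOfPoints P Z β) =
      idealBelow P (∏ᶜ Z) (Finset.univ.sup fun j => P.map (Pi.π Z j).op (β j)) :=
  genUnivIdeal_eq (isUniversalIdeal_idealBelow P _ _) (familyOfPoints_subset_idealBelow P Z β)
    fun _ hI hZI => idealBelow_subset P Z β hI hZI

end Doctrine

theorem stmt13 {C : Type u₁} [Category.{v₁} C] [HasFiniteProducts C]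
    (P : Cᵒᵖ ⥤ BoolAlg.{w}) {ibar jbar : ℕ} (Y : Fin ibar → C) (Z : Fin jbar → C)
    (α : ∀ i, P.obj (op (Y i))) (β : ∀ j, P.obj (op (Z j))) :
    (∃ X : C,
        (genUnivFilter P (familyOfPoints P Y α) X ∩
          genUnivIdeal P (familyOfPoints P Z β) X).Nonempty) ↔
      ∃ (n : ℕ) (l : Fin n → Fin ibar) (g : ∀ i : Fin n, (∏ᶜ Z) ⟶ Y (l i)),
        (Finset.univ.inf fun i => P.map (g i).op (α (l i))) ≤
          Finset.univ.sup fun j => P.map (Pi.π Z j).op (β j) := by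
  rw [genUnivFilter_familyOfPoints, genUnivIdeal_familyOfPoints]
  constructor
  · rintro ⟨X, φ, hφF, hφI⟩
    obtain ⟨ι, _, l, g, hle⟩ :=
      (isUniversalFilter_filterOfPoints P Y α).mem_of_mem_idealBelow hφF hφI
    let e := (Fintype.equivFin ι).symm
    refine ⟨Fintype.card ι, fun i => l (e i), fun i => g (e i), ?_⟩
    rwa [Finset.inf_univ_comp_equiv e fun i => P.map (g i).op (α (l i))]
  · rintro ⟨n, l, g, hle⟩
    exact ⟨∏ᶜ Z, _, ⟨Fin n, inferInstance, l, g, hle⟩, self_mem_idealBelow P _ _⟩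

end BooleanDoctrine
end

section
/- Let P : Cᵒᵖ → BoolAlg be a Boolean doctrine over a small category C with finite products, and let F = (F_X)_{X ∈ C} be a family with F_X ⊆ P(X) for each X ∈ C. Then the following are equivalent: (1) there is a family ℳ of propositional models of P such that, for every X ∈ C, F_X = {α ∈ P(X) : for all (M, 𝔪) ∈ ℳ and all x ∈ M(X), x ∈ 𝔪_X(α)}; (2) F is a universal filter for P; (3) F is the componentwise intersection of the universal ultrafilters for P containing F componentwise. Moreover, the analogous equivalence holds for the strengthened statements obtained by additionally requiring ℳ to be nonempty in (1), ⊥ ∉ F_t in (2), and the existence of at least one universal ultrafilter for P containing F componentwise in (3). -/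
open CategoryTheory CategoryTheory.Limits Opposite

universe w v u v₁ u₁ v₂ u₂ v₃ u₃

namespace BooleanDoctrine

/-!
The theory of a propositional model `M` (the formulas it interprets as the whole of `M X`) is
a universal ultrafilter: since `M` preserves binary products, points refuting `α₁` and `α₂`
pair up to a point refuting `P(pr₁) α₁ ∨ P(pr₂) α₂`, and since `M` preserves the terminal
object, `⊥` is refuted. Conversely, if a universal filter `F` omits `α ∈ P X`, pick a prime
filter `U ⊇ F X` of `P X` omitting `α`; the representable model `Y ↦ (X ⟶ Y)` interpreting
`β` as `{f | P f β ∈ U}` validates all of `F` but not `α`. So a universal filter is the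
intersection of the theories, hence of the universal ultrafilters, containing it, while any
such intersection is a universal filter. A model, or a universal ultrafilter, containing `F`
exists exactly when `⊥ ∉ F t`, by the same construction at `α = ⊥ ∈ P t`.
-/

def _root_.Order.Ideal.IsPrime.notMemHom {A : Type*} [Lattice A] [BoundedOrder A]
    {J : Order.Ideal A} (hJ : J.IsPrime) : BoundedLatticeHom A Prop where
  toFun a := a ∉ J
  map_sup' _ _ := propext <| (not_congr Order.Ideal.sup_mem_iff).trans not_and_or
  map_inf' _ _ := propext
    ⟨fun h => ⟨fun ha => h (J.lower inf_le_left ha), fun hb => h (J.lower inf_le_right hb)⟩,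
      fun h hab => (hJ.mem_or_mem hab).elim h.1 h.2⟩
  map_top' := eq_true hJ.top_notMem
  map_bot' := eq_false (not_not.2 J.bot_mem)

theorem IsBAFilter.exists_boundedLatticeHom_prop_of_notMem {A : Type*} [BooleanAlgebra A]
    {F : Set A} (hF : IsBAFilter F) {a : A} (ha : a ∉ F) :
    ∃ h : BoundedLatticeHom A Prop, (∀ b ∈ F, h b) ∧ ¬ h a := by
  obtain ⟨htop, hinf, hup⟩ := hF
  let F' : Order.PFilter A := (Order.IsPFilter.of_def ⟨⊤, htop⟩
    (fun x hx y hy => ⟨x ⊓ y, hinf x y hx hy, inf_le_left, inf_le_right⟩)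
    (fun hxy hx => hup _ _ hx hxy)).toPFilter
  have hdisj : Disjoint (F' : Set A) (Order.Ideal.principal a : Set A) :=
    Set.disjoint_left.2 fun b hb hba => ha (hup b a hb hba)
  obtain ⟨J, hJ, haJ, hFJ⟩ := DistribLattice.prime_ideal_of_disjoint_filter_ideal hdisj
  exact ⟨hJ.notMemHom, fun b hb hbJ => Set.disjoint_left.1 hFJ hb hbJ,
    fun h => h (haJ le_rfl)⟩

section
variable {C : Type u} [Category.{v} C] {P : Cᵒᵖ ⥤ BoolAlg.{v}}

namespace PropModel

variable (M : PropModel P)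

lemma interp_map_s19 {X Y : C} (f : X ⟶ Y) (α : P.obj (op Y)) :
    M.interp (P.map f.op α) = M.functor.map f ⁻¹' M.interp α :=
  DFunLike.congr_fun (M.trans.naturality f.op) α

lemma interp_sup {X : C} (α β : P.obj (op X)) :
    M.interp (α ⊔ β) = M.interp α ∪ M.interp β := by
  rw [interp, interp, interp, map_sup]
  rfl

lemma interp_inf {X : C} (α β : P.obj (op X)) :
    M.interp (α ⊓ β) = M.interp α ∩ M.interp β := by
  rw [interp, interp, interp, map_inf]
  rfl

lemma interp_top (X : C) : M.interp (⊤ : P.obj (op X)) = Set.univ :=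
  map_top (M.trans.app (op X))

lemma interp_bot (X : C) : M.interp (⊥ : P.obj (op X)) = ∅ :=
  map_bot (M.trans.app (op X))

def theory (X : C) : Set (P.obj (op X)) :=
  {α | ∀ x, x ∈ M.interp α}

end PropModel

/-- `h` is the characteristic map of a prime filter `U` of `P W`, and `β ∈ P Y` is interpreted
as `{f : W ⟶ Y | P f β ∈ U}`. -/
def pointModel (W : C) (h : BoundedLatticeHom (P.obj (op W)) Prop) : PropModel P where
  functor := coyoneda.obj (op W)
  preserves := ⟨fun _ => inferInstance⟩
  trans :=
    { app X := BoolAlg.ofHom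
        { toFun α := {f : W ⟶ X.unop | h (P.map f.op α)}
          map_sup' α β := by ext f; simp
          map_inf' α β := by ext f; simp
          map_top' := by ext f; simp
          map_bot' := by ext f; simp }
      naturality X Y g := by
        ext α : 2
        refine Set.ext fun f => ?_
        show h (P.map f.op (P.map g α)) ↔ h (P.map (f ≫ g.unop).op α)
        rw [op_comp, P.map_comp]
        rfl }

lemma mem_theory_pointModel (W : C) (h : BoundedLatticeHom (P.obj (op W)) Prop) {X : C}
    (α : P.obj (op X)) : α ∈ (pointModel W h).theory X ↔ ∀ f : W ⟶ X, h (P.map f.op α) :=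
  Iff.rfl

end

section
variable {C : Type u} [Category.{v} C] [HasFiniteProducts C] {P : Cᵒᵖ ⥤ BoolAlg.{v}}

namespace PropModel

variable (M : PropModel P)

lemma exists_map_fst_eq_and_map_snd_eq {X₁ X₂ : C} (x₁ : M.functor.obj X₁)
    (x₂ : M.functor.obj X₂) : ∃ z : M.functor.obj (X₁ ⨯ X₂),
      M.functor.map prod.fst z = x₁ ∧ M.functor.map prod.snd z = x₂ := by
  have := M.preserves
  refine ⟨(PreservesLimitPair.iso M.functor X₁ X₂).inv
    ((Types.binaryProductIso _ _).inv (x₁, x₂)), ?_, ?_⟩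
  · rw [← ConcreteCategory.comp_apply, PreservesLimitPair.iso_inv_fst,
      Types.binaryProductIso_inv_comp_fst_apply]
  · rw [← ConcreteCategory.comp_apply, PreservesLimitPair.iso_inv_snd,
      Types.binaryProductIso_inv_comp_snd_apply]

lemma nonempty_obj_terminal : Nonempty (M.functor.obj (⊤_ C)) := by
  have := M.preserves
  exact ⟨(PreservesTerminal.iso M.functor).inv (Types.terminalIso.inv PUnit.unit)⟩

theorem isUniversalUltrafilter_theory : IsUniversalUltrafilter P M.theory := by
  refine ⟨fun X Y f α hα x => ?_, fun X => ⟨fun x => ?_, fun α β hα hβ x => ?_,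
    fun α β hα hle x => ?_⟩, fun X₁ X₂ α₁ α₂ h => ?_, fun h => ?_⟩
  · rw [interp_map_s19]
    exact hα _
  · rw [interp_top]
    trivial
  · rw [interp_inf]
    exact ⟨hα x, hβ x⟩
  · exact OrderHomClass.mono (M.trans.app (op X)) hle (hα x)
  · by_contra! hne
    obtain ⟨x₁, hx₁⟩ := not_forall.1 hne.1
    obtain ⟨x₂, hx₂⟩ := not_forall.1 hne.2
    obtain ⟨z, rfl, rfl⟩ := M.exists_map_fst_eq_and_map_snd_eq x₁ x₂
    have hz := h z
    rw [interp_sup, interp_map_s19, interp_map_s19] at hz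
    exact hz.elim hx₁ hx₂
  · obtain ⟨x⟩ := M.nonempty_obj_terminal
    have hx := h x
    rw [interp_bot] at hx
    exact hx

end PropModel

variable {F : ∀ X : C, Set (P.obj (op X))}

lemma IsUniversalUltrafilter.isUniversalFilter (hF : IsUniversalUltrafilter P F) :
    IsUniversalFilter P F :=
  ⟨hF.1, hF.2.1⟩

lemma isUniversalFilter_of_forall_mem_iff {S : Set (∀ X : C, Set (P.obj (op X)))}
    (hS : ∀ G ∈ S, IsUniversalFilter P G) (hF : ∀ X α, α ∈ F X ↔ ∀ G ∈ S, α ∈ G X) :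
    IsUniversalFilter P F := by
  refine ⟨fun X Y f α hα => ?_, fun X => ⟨?_, fun α β hα hβ => ?_, fun α β hα hle => ?_⟩⟩ <;>
    simp only [hF] at * <;> intro G hG
  · exact (hS G hG).1 X Y f α (hα G hG)
  · exact ((hS G hG).2 X).1
  · exact ((hS G hG).2 X).2.1 α β (hα G hG) (hβ G hG)
  · exact ((hS G hG).2 X).2.2 α β (hα G hG) hle

lemma isUniversalFilter_of_forall_propModel {Ms : Set (PropModel P)}
    (hMs : ∀ X α, α ∈ F X ↔ ∀ M ∈ Ms, α ∈ M.theory X) : IsUniversalFilter P F :=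
  isUniversalFilter_of_forall_mem_iff (S := PropModel.theory '' Ms)
    (by rintro _ ⟨M, -, rfl⟩; exact M.isUniversalUltrafilter_theory.isUniversalFilter)
    (by simpa using hMs)

lemma isUniversalFilter_of_forall_ultrafilter (hF : ∀ X α, α ∈ F X ↔
      ∀ G, IsUniversalUltrafilter P G → (∀ Y, F Y ⊆ G Y) → α ∈ G X) :
    IsUniversalFilter P F :=
  isUniversalFilter_of_forall_mem_iff (S := {G | IsUniversalUltrafilter P G ∧ ∀ Y, F Y ⊆ G Y})
    (fun _ hG => hG.1.isUniversalFilter) (by simpa using hF)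

namespace IsUniversalFilter

theorem exists_propModel_separating (hF : IsUniversalFilter P F) {X : C} {α : P.obj (op X)}
    (hα : α ∉ F X) : ∃ M : PropModel P, (∀ Y, F Y ⊆ M.theory Y) ∧ α ∉ M.theory X := by
  obtain ⟨h, hFh, hαh⟩ := (hF.2 X).exists_boundedLatticeHom_prop_of_notMem hα
  refine ⟨pointModel X h, fun Y β hβ f => hFh _ (hF.1 X Y f β hβ), fun hα' => hαh ?_⟩
  simpa using (mem_theory_pointModel X h α).1 hα' (𝟙 X)

theorem mem_iff_forall_propModel (hF : IsUniversalFilter P F) (X : C) (α : P.obj (op X)) :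
    α ∈ F X ↔ ∀ M : PropModel P, (∀ Y, F Y ⊆ M.theory Y) → α ∈ M.theory X :=
  ⟨fun hα _ hM => hM X hα, fun h => by_contra fun hα =>
    let ⟨M, hM, hαM⟩ := hF.exists_propModel_separating hα
    hαM (h M hM)⟩

theorem mem_iff_forall_ultrafilter (hF : IsUniversalFilter P F) (X : C) (α : P.obj (op X)) :
    α ∈ F X ↔ ∀ G : ∀ Y : C, Set (P.obj (op Y)),
      IsUniversalUltrafilter P G → (∀ Y, F Y ⊆ G Y) → α ∈ G X :=
  ⟨fun hα _ _ hG => hG X hα, fun h => (hF.mem_iff_forall_propModel X α).2 fun M hM =>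
    h M.theory M.isUniversalUltrafilter_theory hM⟩

theorem exists_ultrafilter_of_bot_notMem (hF : IsUniversalFilter P F)
    (hbot : (⊥ : P.obj (op (⊤_ C))) ∉ F (⊤_ C)) :
    ∃ G : ∀ Y : C, Set (P.obj (op Y)), IsUniversalUltrafilter P G ∧ ∀ Y, F Y ⊆ G Y :=
  let ⟨M, hM, _⟩ := hF.exists_propModel_separating hbot
  ⟨M.theory, M.isUniversalUltrafilter_theory, hM⟩

end IsUniversalFilter

end

theorem stmt19 {C : Type u} [SmallCategory C] [HasFiniteProducts C]
    (P : Cᵒᵖ ⥤ BoolAlg.{u}) (F : ∀ X : C, Set (P.obj (op X))) :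
    ((∃ Ms : Set (PropModel P), ∀ (X : C) (α : P.obj (op X)),
        α ∈ F X ↔ ∀ M ∈ Ms, ∀ x : M.functor.obj X, x ∈ PropModel.interp M α) ↔
      IsUniversalFilter P F) ∧
    (IsUniversalFilter P F ↔
      ∀ (X : C) (α : P.obj (op X)),
        α ∈ F X ↔ ∀ G : ∀ X' : C, Set (P.obj (op X')),
          IsUniversalUltrafilter P G → (∀ X' : C, F X' ⊆ G X') → α ∈ G X) ∧
    ((∃ Ms : Set (PropModel P), Ms.Nonempty ∧ ∀ (X : C) (α : P.obj (op X)),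
        α ∈ F X ↔ ∀ M ∈ Ms, ∀ x : M.functor.obj X, x ∈ PropModel.interp M α) ↔
      (IsUniversalFilter P F ∧ (⊥ : P.obj (op (⊤_ C))) ∉ F (⊤_ C))) ∧
    ((IsUniversalFilter P F ∧ (⊥ : P.obj (op (⊤_ C))) ∉ F (⊤_ C)) ↔
      ((∀ (X : C) (α : P.obj (op X)),
          α ∈ F X ↔ ∀ G : ∀ X' : C, Set (P.obj (op X')),
            IsUniversalUltrafilter P G → (∀ X' : C, F X' ⊆ G X') → α ∈ G X) ∧
        ∃ G : ∀ X' : C, Set (P.obj (op X')),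
          IsUniversalUltrafilter P G ∧ ∀ X' : C, F X' ⊆ G X')) := by
  refine ⟨⟨fun ⟨_, hMs⟩ => isUniversalFilter_of_forall_propModel hMs,
      fun hF => ⟨_, hF.mem_iff_forall_propModel⟩⟩,
    ⟨fun hF => hF.mem_iff_forall_ultrafilter, isUniversalFilter_of_forall_ultrafilter⟩,
    ⟨?_, ?_⟩, ⟨?_, ?_⟩⟩
  · rintro ⟨Ms, ⟨M, hM⟩, hMs⟩
    exact ⟨isUniversalFilter_of_forall_propModel hMs,
      fun hbot => M.isUniversalUltrafilter_theory.2.2.2 ((hMs _ _).1 hbot M hM)⟩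
  · rintro ⟨hF, hbot⟩
    obtain ⟨M, hM, -⟩ := hF.exists_propModel_separating hbot
    exact ⟨{M | ∀ Y, F Y ⊆ M.theory Y}, ⟨M, hM⟩, hF.mem_iff_forall_propModel⟩
  · rintro ⟨hF, hbot⟩
    exact ⟨hF.mem_iff_forall_ultrafilter, hF.exists_ultrafilter_of_bot_notMem hbot⟩
  · rintro ⟨h, G, hG, hFG⟩
    exact ⟨isUniversalFilter_of_forall_ultrafilter h, fun hbot => hG.2.2.2 (hFG _ hbot)⟩

end BooleanDoctrine
end
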